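/- arXiv:0810.5493 — 3 statements merged into one kernel-verified Lean document; each statement's English description precedes it below -/
import Mathlib

section
/- Let A and B be square complex matrices of sizes m and n respectively, with disjoint spectra. Then the Sylvester map z ↦ A·z − z·B from the space of m×n complex matrices to itself is a linear isomorphism. -/
/-!
If `A * z = z * B`, then `p(A) * z = z * p(B)` for every polynomial `p`. Disjoint spectra over
`ℂ` make the characteristic polynomials `χ_A`, `χ_B` coprime, say `u χ_A + v χ_B = 1`; by
Cayley–Hamilton `v(A) χ_B(A) = 1`, so a `z` in the kernel satisfies
`z = v(A) χ_B(A) z = v(A) z χ_B(B) = 0`. An injective endomorphism of a finite-dimensional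
space is bijective.
-/

open Polynomial

namespace Matrix

variable {m n R : Type*} [Fintype m] [Fintype n] [DecidableEq m] [DecidableEq n]

section CommRing

variable [CommRing R] {A : Matrix m m R} {B : Matrix n n R} {z : Matrix m n R}

def sylvesterMap (A : Matrix m m R) (B : Matrix n n R) : Matrix m n R →ₗ[R] Matrix m n R :=
  mulLeftLinearMap n R A - mulRightLinearMap m R B

theorem pow_mul_eq_mul_pow (h : A * z = z * B) (k : ℕ) : A ^ k * z = z * B ^ k := by
  induction k with
  | zero => simp
  | succ k ih => rw [pow_succ, Matrix.mul_assoc, h, ← Matrix.mul_assoc, ih, Matrix.mul_assoc,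
      ← pow_succ]

theorem aeval_mul_eq_mul_aeval (h : A * z = z * B) (p : R[X]) :
    aeval A p * z = z * aeval B p := by
  simp only [aeval_eq_sum_range, Matrix.sum_mul, Matrix.mul_sum, Matrix.smul_mul,
    Matrix.mul_smul, pow_mul_eq_mul_pow h]

theorem sylvesterMap_injective (h : IsCoprime A.charpoly B.charpoly) :
    Function.Injective (sylvesterMap A B) := by
  obtain ⟨u, v, huv⟩ := h
  have hinv : aeval A v * aeval A B.charpoly = 1 := by
    simpa [aeval_self_charpoly] using congr_arg (aeval A) huv
  refine (injective_iff_map_eq_zero _).2 fun z hz => ?_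
  have hAz : A * z = z * B := sub_eq_zero.1 hz
  calc z = aeval A v * (aeval A B.charpoly * z) := by
        rw [← Matrix.mul_assoc, hinv, Matrix.one_mul]
    _ = 0 := by
        rw [aeval_mul_eq_mul_aeval hAz, aeval_self_charpoly, Matrix.mul_zero, Matrix.mul_zero]

end CommRing

theorem sylvesterMap_bijective {K : Type*} [Field K] {A : Matrix m m K} {B : Matrix n n K}
    (h : IsCoprime A.charpoly B.charpoly) : Function.Bijective (sylvesterMap A B) :=
  have hinj := sylvesterMap_injective h
  ⟨hinj, LinearMap.injective_iff_surjective.1 hinj⟩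

theorem isCoprime_charpoly_of_disjoint_spectrum {K : Type*} [Field K] [IsAlgClosed K]
    {A : Matrix m m K} {B : Matrix n n K} (h : Disjoint (spectrum K A) (spectrum K B)) :
    IsCoprime A.charpoly B.charpoly := by
  refine (isCoprime_iff_aeval_ne_zero_of_isAlgClosed K K _ _).2 fun μ => ?_
  have hμ : μ ∈ spectrum K A → μ ∉ spectrum K B := fun hA => Set.disjoint_left.1 h hA
  simpa [mem_spectrum_iff_isRoot_charpoly, imp_iff_not_or] using hμ

end Matrix

/-- **Sylvester's theorem.** If `A` is an `m × m` complex matrix and `B` is an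
`n × n` complex matrix with disjoint spectra (no common eigenvalue), then the
Sylvester map `z ↦ A * z - z * B` on `m × n` complex matrices is a linear
isomorphism (it is linear, and we assert bijectivity). -/
theorem sylvester_bijective (m n : ℕ)
    (A : Matrix (Fin m) (Fin m) ℂ) (B : Matrix (Fin n) (Fin n) ℂ)
    (hdisj : ∀ μ : ℂ, μ ∈ spectrum ℂ A → μ ∉ spectrum ℂ B) :
    Function.Bijective (fun z : Matrix (Fin m) (Fin n) ℂ => A * z - z * B) :=
  Matrix.sylvesterMap_bijective
    (Matrix.isCoprime_charpoly_of_disjoint_spectrum (Set.disjoint_left.2 hdisj))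
end

section
/- For the tensor product of abstract crystals and an imaginary index i, the operations ẽ_i and f̃_i on B₁ ⊗ B₂ are mutually inverse where defined: f̃_i(b⊗b') = c implies ẽ_i(c) = b⊗b', and ẽ_i(b⊗b') = c ≠ 0 implies f̃_i(c) = b⊗b'. -/
/-- The data of an abstract crystal for a quantum generalized Kac-Moody algebra:
a set `B` with weight map `wt : B → P`, Kashiwara operators
`e i, f i : B → B ⊔ {0}` (encoded via `Option`, `none` playing the role of `0`)
and maps `ε i, φ i : B → ℤ ⊔ {-∞}` (encoded as `WithBot ℤ`). -/
structure CrystalData (I P B : Type) where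
  wt : B → P
  e : I → B → Option B
  f : I → B → Option B
  eps : I → B → WithBot ℤ
  phi : I → B → WithBot ℤ

/-- The axioms (i)-(vii) of an abstract crystal for a quantum generalized
Kac-Moody algebra with symmetric Borcherds-Cartan matrix `a`, simple roots
`α i ∈ P` and pairing `pair i p = ⟨h_i, p⟩`.  An index `i` is real when
`a i i = 2` and imaginary otherwise. -/
structure IsAbstractCrystal {I P B : Type} [AddCommGroup P]
    (a : I → I → ℤ) (α : I → P) (pair : I → P → ℤ)
    (C : CrystalData I P B) : Prop where
  /-- (i) `wt(ẽᵢ b) = wt b + αᵢ`. -/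
  wt_e : ∀ i b b', C.e i b = some b' → C.wt b' = C.wt b + α i
  /-- (ii) `wt(f̃ᵢ b) = wt b - αᵢ`. -/
  wt_f : ∀ i b b', C.f i b = some b' → C.wt b' = C.wt b - α i
  /-- (iii) `φᵢ(b) = εᵢ(b) + ⟨hᵢ, wt b⟩`. -/
  phi_eq : ∀ i b, C.phi i b = C.eps i b + (pair i (C.wt b) : WithBot ℤ)
  /-- (iv) `f̃ᵢ b = b'` iff `b = ẽᵢ b'`. -/
  ef_iff : ∀ i b b', C.f i b = some b' ↔ C.e i b' = some b
  /-- (v)(a) real case: `εᵢ(ẽᵢ b) = εᵢ(b) - 1`, `φᵢ(ẽᵢ b) = φᵢ(b) + 1`. -/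
  e_real : ∀ i b b', a i i = 2 → C.e i b = some b' →
    C.eps i b' = C.eps i b + ((-1 : ℤ) : WithBot ℤ) ∧
    C.phi i b' = C.phi i b + ((1 : ℤ) : WithBot ℤ)
  /-- (v)(b) imaginary case: `εᵢ(ẽᵢ b) = εᵢ(b)`, `φᵢ(ẽᵢ b) = φᵢ(b) + aᵢᵢ`. -/
  e_imag : ∀ i b b', a i i ≠ 2 → C.e i b = some b' →
    C.eps i b' = C.eps i b ∧
    C.phi i b' = C.phi i b + ((a i i : ℤ) : WithBot ℤ)
  /-- (vi)(a) real case: `εᵢ(f̃ᵢ b) = εᵢ(b) + 1`, `φᵢ(f̃ᵢ b) = φᵢ(b) - 1`. -/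
  f_real : ∀ i b b', a i i = 2 → C.f i b = some b' →
    C.eps i b' = C.eps i b + ((1 : ℤ) : WithBot ℤ) ∧
    C.phi i b' = C.phi i b + ((-1 : ℤ) : WithBot ℤ)
  /-- (vi)(b) imaginary case: `εᵢ(f̃ᵢ b) = εᵢ(b)`, `φᵢ(f̃ᵢ b) = φᵢ(b) - aᵢᵢ`. -/
  f_imag : ∀ i b b', a i i ≠ 2 → C.f i b = some b' →
    C.eps i b' = C.eps i b ∧
    C.phi i b' = C.phi i b + ((-(a i i) : ℤ) : WithBot ℤ)
  /-- (vii) if `φᵢ(b) = -∞` then `ẽᵢ b = f̃ᵢ b = 0`. -/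
  phi_bot : ∀ i b, C.phi i b = ⊥ → C.e i b = none ∧ C.f i b = none

/-- The elementary crystal `B_i = {b_i(-n) : n ≥ 0}`, with carrier `ℕ`
(`n` standing for `b_i(-n)`), weight lattice realized inside the root
lattice `I →₀ ℤ` (so that `α j = Finsupp.single j 1`). -/
noncomputable def elemData (I : Type) [DecidableEq I] (a : I → I → ℤ) (i : I) :
    CrystalData I (I →₀ ℤ) ℕ where
  wt n := Finsupp.single i (-(n : ℤ))
  e j n := if j = i then (if n = 0 then none else some (n - 1)) else none
  f j n := if j = i then some (n + 1) else none
  eps j n := if j = i then (if a i i = 2 then ((n : ℤ) : WithBot ℤ) else 0) else ⊥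
  phi j n := if j = i then
      (((if a i i = 2 then -(n : ℤ) else -(n : ℤ) * a i i) : ℤ) : WithBot ℤ) else ⊥

/-- The tensor product `B₁ ⊗ B₂` of two crystals, with the signed rules of
Jeong-Kang-Kashiwara-Shin: `εᵢ(b⊗b') = max(εᵢ(b), εᵢ(b') - wtᵢ(b))`,
`φᵢ(b⊗b') = max(φᵢ(b) + wtᵢ(b'), φᵢ(b'))`, the usual rule for `f̃ᵢ`, the
usual rule for `ẽᵢ` at a real index, and the three-case rule for `ẽᵢ` at an
imaginary index. -/
noncomputable def tensorData {I P B₁ B₂ : Type} [AddCommGroup P] [DecidableEq I]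
    (a : I → I → ℤ) (pair : I → P → ℤ)
    (C₁ : CrystalData I P B₁) (C₂ : CrystalData I P B₂) :
    CrystalData I P (B₁ × B₂) where
  wt p := C₁.wt p.1 + C₂.wt p.2
  eps i p := max (C₁.eps i p.1)
    (C₂.eps i p.2 + ((-(pair i (C₁.wt p.1)) : ℤ) : WithBot ℤ))
  phi i p := max (C₁.phi i p.1 + ((pair i (C₂.wt p.2) : ℤ) : WithBot ℤ))
    (C₂.phi i p.2)
  f i p := if C₂.eps i p.2 < C₁.phi i p.1
    then (C₁.f i p.1).map (fun x => (x, p.2))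
    else (C₂.f i p.2).map (fun y => (p.1, y))
  e i p := if a i i = 2 then
      (if C₂.eps i p.2 ≤ C₁.phi i p.1
        then (C₁.e i p.1).map (fun x => (x, p.2))
        else (C₂.e i p.2).map (fun y => (p.1, y)))
    else
      (if C₂.eps i p.2 + ((-(a i i) : ℤ) : WithBot ℤ) < C₁.phi i p.1
        then (C₁.e i p.1).map (fun x => (x, p.2))
        else if C₁.phi i p.1 ≤ C₂.eps i p.2
          then (C₂.e i p.2).map (fun y => (p.1, y))
          else none)

/-!
At an imaginary index `ẽᵢ` and `f̃ᵢ` leave `εᵢ` unchanged and shift `φᵢ` by `±aᵢᵢ`, so after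
acting on one factor of `b ⊗ b'` the inequality that selected that factor still selects it for
the inverse operator: `εᵢ(b') < φᵢ(b)` is equivalent to `εᵢ(b') - aᵢᵢ < φᵢ(b) - aᵢᵢ`, and
`φᵢ(b) ≤ εᵢ(b')` implies `φᵢ(b) ≤ εᵢ(b') - aᵢᵢ` because `aᵢᵢ ≤ 0`. Each factor's own
`ẽᵢ`, `f̃ᵢ` are mutually inverse by axiom (iv).
-/

namespace WithBot

variable {α : Type*} [AddGroup α] [LT α] [AddRightStrictMono α] [AddRightReflectLT α]

theorem lt_add_coe_iff_add_neg_coe_lt {x y : WithBot α} {m : α} :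
    x < y + m ↔ x + ((-m : α) : WithBot α) < y := by
  rw [← WithBot.add_lt_add_iff_right (coe_ne_bot : ((-m : α) : WithBot α) ≠ ⊥), add_assoc,
    ← coe_add, add_neg_cancel, coe_zero, add_zero]

end WithBot

section TensorImaginary

variable {I P B₁ B₂ : Type} [AddCommGroup P] [DecidableEq I] {a : I → I → ℤ} {α : I → P}
  {pair : I → P → ℤ} {C₁ : CrystalData I P B₁} {C₂ : CrystalData I P B₂} {i : I}
  {b x : B₁} {b' y : B₂}

theorem tensorData_f_of_lt (h : C₂.eps i b' < C₁.phi i b) :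
    (tensorData a pair C₁ C₂).f i (b, b') = (C₁.f i b).map (·, b') :=
  if_pos h

theorem tensorData_f_of_le (h : C₁.phi i b ≤ C₂.eps i b') :
    (tensorData a pair C₁ C₂).f i (b, b') = (C₂.f i b').map (b, ·) :=
  if_neg (not_lt.mpr h)

theorem tensorData_e_of_lt (hi : a i i ≠ 2)
    (h : C₂.eps i b' + ((-(a i i) : ℤ) : WithBot ℤ) < C₁.phi i b) :
    (tensorData a pair C₁ C₂).e i (b, b') = (C₁.e i b).map (·, b') := by
  simp only [tensorData, if_neg hi, if_pos h]

theorem tensorData_e_of_le (hi : a i i ≤ 0) (h : C₁.phi i b ≤ C₂.eps i b') :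
    (tensorData a pair C₁ C₂).e i (b, b') = (C₂.e i b').map (b, ·) := by
  have hnot : ¬ C₂.eps i b' + ((-(a i i) : ℤ) : WithBot ℤ) < C₁.phi i b :=
    not_lt.mpr (h.trans (le_add_of_nonneg_right (WithBot.coe_nonneg.mpr (by omega))))
  simp only [tensorData, if_neg (show a i i ≠ 2 by omega), if_neg hnot, if_pos h]

theorem tensorData_e_of_f_fst (h₁ : IsAbstractCrystal a α pair C₁) (hi : a i i ≠ 2)
    (h : C₂.eps i b' < C₁.phi i b) (hx : C₁.f i b = some x) :
    (tensorData a pair C₁ C₂).e i (x, b') = some (b, b') := by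
  have hphi : C₂.eps i b' + ((-(a i i) : ℤ) : WithBot ℤ) < C₁.phi i x := by
    rw [(h₁.f_imag i b x hi hx).2]
    exact WithBot.add_lt_add_right WithBot.coe_ne_bot h
  rw [tensorData_e_of_lt hi hphi, (h₁.ef_iff i b x).mp hx, Option.map_some]

theorem tensorData_e_of_f_snd (h₂ : IsAbstractCrystal a α pair C₂) (hi : a i i ≤ 0)
    (h : C₁.phi i b ≤ C₂.eps i b') (hy : C₂.f i b' = some y) :
    (tensorData a pair C₁ C₂).e i (b, y) = some (b, b') := by
  have heps : C₁.phi i b ≤ C₂.eps i y := by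
    rwa [(h₂.f_imag i b' y (by omega) hy).1]
  rw [tensorData_e_of_le hi heps, (h₂.ef_iff i b' y).mp hy, Option.map_some]

theorem tensorData_f_of_e_fst (h₁ : IsAbstractCrystal a α pair C₁) (hi : a i i ≠ 2)
    (h : C₂.eps i b' + ((-(a i i) : ℤ) : WithBot ℤ) < C₁.phi i b) (hx : C₁.e i b = some x) :
    (tensorData a pair C₁ C₂).f i (x, b') = some (b, b') := by
  have hphi : C₂.eps i b' < C₁.phi i x := by
    rwa [(h₁.e_imag i b x hi hx).2, WithBot.lt_add_coe_iff_add_neg_coe_lt]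
  rw [tensorData_f_of_lt hphi, (h₁.ef_iff i x b).mpr hx, Option.map_some]

theorem tensorData_f_of_e_snd (h₂ : IsAbstractCrystal a α pair C₂) (hi : a i i ≠ 2)
    (h : C₁.phi i b ≤ C₂.eps i b') (hy : C₂.e i b' = some y) :
    (tensorData a pair C₁ C₂).f i (b, y) = some (b, b') := by
  have heps : C₁.phi i b ≤ C₂.eps i y := by
    rwa [(h₂.e_imag i b' y hi hy).1]
  rw [tensorData_f_of_le heps, (h₂.ef_iff i y b').mpr hy, Option.map_some]

end TensorImaginary

theorem tensor_e_f_inverse_imaginary_general (I P B₁ B₂ : Type) [AddCommGroup P]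
    [DecidableEq I]
    (a : I → I → ℤ)
    (α : I → P) (pair : I → P → ℤ)
    (C₁ : CrystalData I P B₁) (C₂ : CrystalData I P B₂)
    (h₁ : IsAbstractCrystal a α pair C₁)
    (h₂ : IsAbstractCrystal a α pair C₂)
    (i : I) (himag : a i i ≤ 0) :
    (∀ p c, (tensorData a pair C₁ C₂).f i p = some c →
      (tensorData a pair C₁ C₂).e i c = some p) ∧
    (∀ p c, (tensorData a pair C₁ C₂).e i p = some c →
      (tensorData a pair C₁ C₂).f i c = some p) := by
  have hi : a i i ≠ 2 := by omega
  refine ⟨fun ⟨b, b'⟩ c hc => ?_, fun ⟨b, b'⟩ c hc => ?_⟩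
  · rcases lt_or_ge (C₂.eps i b') (C₁.phi i b) with h | h
    · rw [tensorData_f_of_lt h, Option.map_eq_some_iff] at hc
      obtain ⟨x, hx, rfl⟩ := hc
      exact tensorData_e_of_f_fst h₁ hi h hx
    · rw [tensorData_f_of_le h, Option.map_eq_some_iff] at hc
      obtain ⟨y, hy, rfl⟩ := hc
      exact tensorData_e_of_f_snd h₂ himag h hy
  · by_cases h : C₂.eps i b' + ((-(a i i) : ℤ) : WithBot ℤ) < C₁.phi i b
    · rw [tensorData_e_of_lt hi h, Option.map_eq_some_iff] at hc
      obtain ⟨x, hx, rfl⟩ := hc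
      exact tensorData_f_of_e_fst h₁ hi h hx
    · by_cases h' : C₁.phi i b ≤ C₂.eps i b'
      · rw [tensorData_e_of_le himag h', Option.map_eq_some_iff] at hc
        obtain ⟨y, hy, rfl⟩ := hc
        exact tensorData_f_of_e_snd h₂ hi h' hy
      · simp [tensorData, hi, h, h'] at hc

/-- **For an imaginary index, `ẽᵢ` and `f̃ᵢ` on a tensor product of crystals
are mutually inverse where defined:** `f̃ᵢ(b⊗b') = c` implies
`ẽᵢ(c) = b⊗b'`, and `ẽᵢ(b⊗b') = c ≠ 0` implies `f̃ᵢ(c) = b⊗b'`. -/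
theorem tensor_e_f_inverse_imaginary (I P B₁ B₂ : Type) [AddCommGroup P]
    [DecidableEq I]
    (a : I → I → ℤ)
    (hdiag : ∀ j, a j j = 2 ∨ (a j j ≤ 0 ∧ Even (a j j)))
    (hsymm : ∀ j k, a j k = a k j)
    (hoff : ∀ j k, j ≠ k → a j k ≤ 0)
    (α : I → P) (pair : I → P → ℤ)
    (hpair : ∀ j k, pair j (α k) = a j k)
    (hpair_add : ∀ j p q, pair j (p + q) = pair j p + pair j q)
    (C₁ : CrystalData I P B₁) (C₂ : CrystalData I P B₂)
    (h₁ : IsAbstractCrystal a α pair C₁)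
    (h₂ : IsAbstractCrystal a α pair C₂)
    (i : I) (himag : a i i ≤ 0) :
    (∀ p c, (tensorData a pair C₁ C₂).f i p = some c →
      (tensorData a pair C₁ C₂).e i c = some p) ∧
    (∀ p c, (tensorData a pair C₁ C₂).e i p = some c →
      (tensorData a pair C₁ C₂).f i c = some p) :=
  tensor_e_f_inverse_imaginary_general I P B₁ B₂ a α pair C₁ C₂ h₁ h₂ i himag
end

section
/- Let B = (B_h) be an I-graded representation on V of a quiver with vertex set I. If B admits an I-graded complete flag F₀ ⊂ F₁ ⊂ ⋯ ⊂ F_d = V with B_h(F_k) ⊂ F_k for loops h and B_h(F_k) ⊂ F_{k−1} for non-loops h, and V ≠ 0, then there exists i ∈ I with ℂ⟨B⟩_i · Σ_{h: j→i, j≠i} Im B_h ≠ V_i. -/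
open Module Submodule

/-- **Lemma 2.3(b) of Kang-Kashiwara-Schiffmann, stated abstractly.**
Let `(I, H)` be a quiver and `W = ⊕ᵢ Vᵢ` a nonzero finite-dimensional
`I`-graded complex vector space, with graded operators `B h : V (out h) →
V (inn h)`.  Suppose `B` admits an `I`-graded complete flag
`⊥ = F 0 ⊂ F 1 ⊂ ⋯ ⊂ F d = W` with `B h (F k) ⊆ F k` for loops `h` and
`B h (F (k+1)) ⊆ F k` for non-loops `h`.  Then there exists a vertex `i`
such that the characteristic subspace
`ℂ⟨B⟩ᵢ · ∑_{h : j → i, j ≠ i} Im B_h` is a proper subspace of `Vᵢ`: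
i.e. there is a proper subspace `U < Vᵢ` invariant under all loop operators
at `i` and containing the images of all non-loop arrows into `i`. -/
theorem exists_proper_characteristic_subspace
    (I H W : Type) [AddCommGroup W] [Module ℂ W] [FiniteDimensional ℂ W]
    (out inn : H → I)
    (V : I → Submodule ℂ W)
    (hindep : iSupIndep V) (hspan : (⨆ i, V i) = ⊤)
    (B : H → (W →ₗ[ℂ] W))
    (hgrade : ∀ h, LinearMap.range (B h) ≤ V (inn h))
    (hvanish : ∀ h j, j ≠ out h → ∀ w ∈ V j, B h w = 0)
    (d : ℕ) (hd : d = finrank ℂ W)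
    (F : ℕ → Submodule ℂ W)
    (hmono : Monotone F) (hF0 : F 0 = ⊥) (hFd : F d = ⊤)
    (hstep : ∀ k < d, finrank ℂ (F (k + 1)) = finrank ℂ (F k) + 1)
    (hgraded : ∀ k, F k = ⨆ i, (F k ⊓ V i))
    (hloop : ∀ h, out h = inn h → ∀ k, Submodule.map (B h) (F k) ≤ F k)
    (hnonloop : ∀ h, out h ≠ inn h → ∀ k, Submodule.map (B h) (F (k + 1)) ≤ F k)
    (hne : 0 < finrank ℂ W) :
    ∃ i : I, ∃ U : Submodule ℂ W, U < V i ∧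
      (∀ h, out h = i → inn h = i → Submodule.map (B h) U ≤ U) ∧
      (∀ h, inn h = i → out h ≠ i → LinearMap.range (B h) ≤ U) := by
  have hdpos : 0 < d := hd ▸ hne
  have hd1 : d - 1 + 1 = d := Nat.succ_pred_eq_of_pos hdpos
  have hi : ∃ i, ¬ V i ≤ F (d - 1) := by
    by_contra hc
    push_neg at hc
    have htop : F (d - 1) = ⊤ := top_le_iff.mp (hspan ▸ iSup_le hc)
    have h1 := hstep (d - 1) (by omega)
    rw [hd1, hFd, htop, finrank_top] at h1
    omega
  obtain ⟨i, hi⟩ := hi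
  refine ⟨i, F (d - 1) ⊓ V i, ?_, ?_, ?_⟩
  · exact lt_of_le_of_ne inf_le_right (fun h => hi (inf_eq_right.mp h))
  · intro h hout hinn
    refine le_inf ?_ ?_
    · exact le_trans (Submodule.map_mono inf_le_left)
        (hloop h (hout.trans hinn.symm) (d - 1))
    · exact le_trans (le_trans (Submodule.map_mono le_top) ((Submodule.map_top (B h)).le.trans (hgrade h))) (le_of_eq (congrArg V hinn))
  · intro h hinn _
    refine le_inf ?_ (hinn ▸ hgrade h)
    have := hnonloop h (by rw [hinn]; intro he; exact ‹out h ≠ i› he) (d - 1)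
    rw [hd1, hFd] at this
    calc LinearMap.range (B h) = Submodule.map (B h) ⊤ := (Submodule.map_top _).symm
      _ ≤ F (d - 1) := this
end
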